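/- arXiv:2010.09793 — 2 statements merged into one kernel-verified Lean document; each statement's English description precedes it below -/
import Mathlib

section
/- Let μ be an Ahlfors regular measure of dimension d on E ⊂ ℝⁿ and σ = c H^d|_P a flat measure on an affine d-plane P. Suppose D_{x,Nr}(μ,σ) ≤ 2η, where D_{x,R}(μ,σ) = R^{-d-1} sup |∫φ dμ − ∫φ dσ| over 1-Lipschitz functions φ vanishing outside B(x,R). If N is large enough and η small enough (depending on n, d, and the AR constant of μ), then P meets B(x, Nr/4) and C⁻¹ ≤ c ≤ C, where C depends only on n, d, and the AR constant of μ. -/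
open MeasureTheory Metric Set ENNReal

noncomputable section

/-- `μ` is Ahlfors regular of dimension `d` with constant `C₀` on the set `E`. -/
def AhlforsRegular {n : ℕ} (μ : Measure (EuclideanSpace ℝ (Fin n)))
    (E : Set (EuclideanSpace ℝ (Fin n))) (d C₀ : ℝ) : Prop :=
  ∀ x ∈ E, ∀ r : ℝ, 0 < r →
    ENNReal.ofReal (C₀⁻¹ * r ^ d) ≤ μ (Metric.ball x r) ∧
      μ (Metric.ball x r) ≤ ENNReal.ofReal (C₀ * r ^ d)

/-- The set `B ⊆ E × (0,∞)` satisfies a Carleson packing condition with constant `C`. -/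
def CarlesonPacking {n : ℕ} (μ : Measure (EuclideanSpace ℝ (Fin n)))
    (E : Set (EuclideanSpace ℝ (Fin n))) (d : ℝ)
    (B : Set (EuclideanSpace ℝ (Fin n) × ℝ)) (C : ℝ) : Prop :=
  ∀ x ∈ E, ∀ r : ℝ, 0 < r →
    (∫⁻ y in E ∩ Metric.ball x r, ∫⁻ t in Set.Ioo (0:ℝ) r,
        B.indicator (fun _ => (1:ℝ≥0∞)) (y, t) / ENNReal.ofReal t ∂volume ∂μ)
      ≤ ENNReal.ofReal (C * r ^ d)

/-!
Test the closeness hypothesis on tent functions `z ↦ max 0 (s - |z - q|)`, which are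
1-Lipschitz and whose integral against any measure is comparable to `s` times the mass of a ball
around `q`. A tent centred at `x` of radius `Nr/4` has integral `≳ C₀⁻¹ (Nr)^{d+1}` against `μ`,
so for small `η` its `σ`-integral cannot vanish and `P` meets `B(x, Nr/4)`. Once a point `p` of `P`
is found there, `σ(B(p,t)) = c ω_d t^d` exactly, and comparing tents of radius `Nr/2` centred at `p`
and at `x` with the Ahlfors bounds of `μ` gives `c ω_d ≈ 1` up to constants depending on
`d` and `C₀`.
-/

section Tent

variable {X : Type*} [PseudoMetricSpace X]

def tent (q : X) (s : ℝ) (z : X) : ℝ := max 0 (s - dist z q)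

lemma lipschitzWith_tent (q : X) (s : ℝ) : LipschitzWith 1 (tent q s) := by
  unfold tent
  simpa using ((IsometryEquiv.subLeft s).isometry.lipschitz.comp
    (LipschitzWith.dist_left q)).const_max 0

lemma tent_nonneg (q : X) (s : ℝ) (z : X) : 0 ≤ tent q s z := le_max_left _ _

lemma tent_eq_zero_of_notMem_ball {q z : X} {s : ℝ} (hz : z ∉ ball q s) : tent q s z = 0 :=
  max_eq_left (by rw [mem_ball, not_lt] at hz; linarith)

lemma tent_le_indicator_ball {s : ℝ} (hs : 0 ≤ s) (q : X) :
    tent q s ≤ (ball q s).indicator (fun _ ↦ s) := by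
  intro z
  by_cases hz : z ∈ ball q s
  · rw [indicator_of_mem hz]
    exact max_le hs (by linarith [dist_nonneg (x := z) (y := q)])
  · rw [indicator_of_notMem hz, tent_eq_zero_of_notMem_ball hz]

lemma indicator_ball_half_le_tent (q : X) (s : ℝ) :
    (ball q (s / 2)).indicator (fun _ ↦ s / 2) ≤ tent q s := by
  intro z
  by_cases hz : z ∈ ball q (s / 2)
  · rw [indicator_of_mem hz]
    exact le_max_of_le_right (by linarith [mem_ball.1 hz])
  · rw [indicator_of_notMem hz]
    exact tent_nonneg q s z

variable [MeasurableSpace X] [OpensMeasurableSpace X] {ν ν' : Measure X} {q : X} {s : ℝ}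

lemma integrable_tent (hs : 0 ≤ s) (hν : ν (ball q s) ≠ ⊤) : Integrable (tent q s) ν := by
  refine Integrable.mono' ((integrableOn_const hν).integrable_indicator measurableSet_ball)
    (lipschitzWith_tent q s).continuous.aestronglyMeasurable (ae_of_all _ fun z ↦ ?_)
  rw [Real.norm_of_nonneg (tent_nonneg q s z)]
  exact tent_le_indicator_ball hs q z

lemma integral_tent_le (hs : 0 ≤ s) (hν : ν (ball q s) ≠ ⊤) :
    ∫ z, tent q s z ∂ν ≤ s * ν.real (ball q s) := by
  calc ∫ z, tent q s z ∂ν ≤ ∫ z, (ball q s).indicator (fun _ ↦ s) z ∂ν :=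
        integral_mono (integrable_tent hs hν)
          ((integrableOn_const hν).integrable_indicator measurableSet_ball)
          (tent_le_indicator_ball hs q)
    _ = s * ν.real (ball q s) := by
        rw [integral_indicator_const _ measurableSet_ball, smul_eq_mul, mul_comm]

lemma le_integral_tent (hs : 0 ≤ s) (hν : ν (ball q s) ≠ ⊤) :
    s / 2 * ν.real (ball q (s / 2)) ≤ ∫ z, tent q s z ∂ν := by
  have hν' : ν (ball q (s / 2)) ≠ ⊤ :=
    ne_top_of_le_ne_top hν (measure_mono (ball_subset_ball (by linarith)))
  calc s / 2 * ν.real (ball q (s / 2))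
        = ∫ z, (ball q (s / 2)).indicator (fun _ ↦ s / 2) z ∂ν := by
        rw [integral_indicator_const _ measurableSet_ball, smul_eq_mul, mul_comm]
    _ ≤ ∫ z, tent q s z ∂ν :=
        integral_mono ((integrableOn_const hν').integrable_indicator measurableSet_ball)
          (integrable_tent hs hν) (indicator_ball_half_le_tent q s)

end Tent

section Close

variable {X : Type*} [PseudoMetricSpace X] [MeasurableSpace X]

-- `ε ≥ R^{d+1} D_{x,R}(ν, ν')` in the notation of the paper.
def IntegralsLipschitzClose (ν ν' : Measure X) (x : X) (R ε : ℝ) : Prop :=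
  ∀ φ : X → ℝ, LipschitzWith 1 φ → (∀ z ∉ ball x R, φ z = 0) →
    |(∫ z, φ z ∂ν) - ∫ z, φ z ∂ν'| ≤ ε

namespace IntegralsLipschitzClose

variable {ν ν' : Measure X} {x q : X} {R ε s : ℝ}

lemma symm (h : IntegralsLipschitzClose ν ν' x R ε) : IntegralsLipschitzClose ν' ν x R ε :=
  fun φ hφ hsupp ↦ abs_sub_comm (∫ z, φ z ∂ν) _ ▸ h φ hφ hsupp

lemma half_mul_measureReal_ball_le [OpensMeasurableSpace X]
    (h : IntegralsLipschitzClose ν ν' x R ε) (hs : 0 ≤ s) (hsub : ball q s ⊆ ball x R)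
    (hν : ν (ball q s) ≠ ⊤) (hν' : ν' (ball q s) ≠ ⊤) :
    s / 2 * ν.real (ball q (s / 2)) ≤ s * ν'.real (ball q s) + ε := by
  have hclose := h _ (lipschitzWith_tent q s)
    fun z hz ↦ tent_eq_zero_of_notMem_ball fun hz' ↦ hz (hsub hz')
  linarith [le_integral_tent hs hν, integral_tent_le hs hν', (abs_le.1 hclose).2]

end IntegralsLipschitzClose

end Close

namespace AhlforsRegular

variable {n : ℕ} {μ : Measure (EuclideanSpace ℝ (Fin n))} {E : Set (EuclideanSpace ℝ (Fin n))}
  {d C₀ : ℝ} {x : EuclideanSpace ℝ (Fin n)} {r : ℝ}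

lemma measure_ball_ne_top (h : AhlforsRegular μ E d C₀) (hx : x ∈ E) (hr : 0 < r) :
    μ (ball x r) ≠ ⊤ :=
  ne_top_of_le_ne_top ofReal_ne_top (h x hx r hr).2

lemma le_measureReal_ball (h : AhlforsRegular μ E d C₀) (hx : x ∈ E) (hr : 0 < r) :
    C₀⁻¹ * r ^ d ≤ μ.real (ball x r) :=
  (ofReal_le_iff_le_toReal (h.measure_ball_ne_top hx hr)).1 (h x hx r hr).1

lemma measureReal_ball_le (h : AhlforsRegular μ E d C₀) (hC₀ : 0 ≤ C₀) (hx : x ∈ E)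
    (hr : 0 < r) : μ.real (ball x r) ≤ C₀ * r ^ d :=
  toReal_le_of_le_ofReal (by positivity) (h x hx r hr).2

end AhlforsRegular

instance (d : ℕ) : (μH[(d : ℝ)] : Measure (EuclideanSpace ℝ (Fin d))).IsAddHaarMeasure := by
  simpa using isAddHaarMeasure_hausdorffMeasure (E := EuclideanSpace ℝ (Fin d))

def unitBallHausdorffMeasure (d : ℕ) : ℝ :=
  μH[(d : ℝ)].real (ball (0 : EuclideanSpace ℝ (Fin d)) 1)

lemma unitBallHausdorffMeasure_pos (d : ℕ) : 0 < unitBallHausdorffMeasure d :=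
  toReal_pos (measure_ball_pos _ _ one_pos).ne' measure_ball_lt_top.ne

section Flat

variable {V : Type*} [NormedAddCommGroup V] [InnerProductSpace ℝ V] [MeasurableSpace V]
  [BorelSpace V]

lemma hausdorffMeasure_ball_inter_affineSubspace {s : ℝ} (hs : 0 ≤ s) {d : ℕ}
    {P : AffineSubspace ℝ V} [FiniteDimensional ℝ P.direction]
    (hP : Module.finrank ℝ P.direction = d) {p : V} (hp : p ∈ P) (t : ℝ) :
    μH[s] (ball p t ∩ P) = μH[s] (ball (0 : EuclideanSpace ℝ (Fin d)) t) := by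
  have : Nonempty P := ⟨⟨p, hp⟩⟩
  let e : EuclideanSpace ℝ (Fin d) ≃ᵃⁱ[ℝ] P :=
    ((stdOrthonormalBasis ℝ P.direction).reindex (finCongr hP)).repr.symm
      |>.toAffineIsometryEquiv.trans (AffineIsometryEquiv.vaddConst ℝ ⟨p, hp⟩)
  have he : e 0 = ⟨p, hp⟩ := by simp [e]
  have himage : ((↑) ∘ e) '' ball 0 t = ball p t ∩ P := by
    rw [image_comp, show e '' ball 0 t = ball (e 0) t from e.toIsometryEquiv.image_ball 0 t, he]
    exact Subtype.image_ball _ t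
  rw [← himage]
  exact (isometry_subtype_coe.comp e.isometry).hausdorffMeasure_image (Or.inl hs) _

def flatMeasure (c : ℝ) (P : AffineSubspace ℝ V) (d : ℕ) : Measure V :=
  ENNReal.ofReal c • μH[(d : ℝ)].restrict (P : Set V)

variable {d : ℕ} {P : AffineSubspace ℝ V} [FiniteDimensional ℝ P.direction] {p : V} {c t : ℝ}

lemma flatMeasure_ball (hP : Module.finrank ℝ P.direction = d) (hp : p ∈ P) (ht : 0 < t) :
    flatMeasure c P d (ball p t) = ENNReal.ofReal c *
      (ENNReal.ofReal (t ^ d) * μH[(d : ℝ)] (ball (0 : EuclideanSpace ℝ (Fin d)) 1)) := by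
  rw [flatMeasure, Measure.smul_apply, smul_eq_mul, Measure.restrict_apply measurableSet_ball,
    hausdorffMeasure_ball_inter_affineSubspace d.cast_nonneg hP hp,
    Measure.addHaar_ball_of_pos _ _ ht, finrank_euclideanSpace_fin]

lemma flatMeasure_ball_ne_top (hP : Module.finrank ℝ P.direction = d) (hp : p ∈ P)
    (ht : 0 < t) : flatMeasure c P d (ball p t) ≠ ⊤ := by
  rw [flatMeasure_ball hP hp ht]
  exact mul_ne_top ofReal_ne_top (mul_ne_top ofReal_ne_top measure_ball_lt_top.ne)

lemma flatMeasure_real_ball (hc : 0 ≤ c) (hP : Module.finrank ℝ P.direction = d) (hp : p ∈ P)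
    (ht : 0 < t) :
    (flatMeasure c P d).real (ball p t) = c * t ^ d * unitBallHausdorffMeasure d := by
  rw [measureReal_def, flatMeasure_ball hP hp ht, toReal_mul, toReal_mul, toReal_ofReal hc,
    toReal_ofReal (by positivity), unitBallHausdorffMeasure, measureReal_def, mul_assoc]

end Flat

lemma le_pow_mul_of_mul_div_pow_le {a b R k : ℝ} (hR : 0 < R) (hk : 0 < k) (m : ℕ)
    (h : a * (R / k) ^ m ≤ b * R ^ m) : a ≤ k ^ m * b := by
  rw [div_pow, ← mul_div_assoc, div_le_iff₀ (by positivity)] at h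
  exact le_of_mul_le_mul_right (by linarith) (pow_pos hR m)

namespace AhlforsRegular

variable {n d : ℕ} {μ ν : Measure (EuclideanSpace ℝ (Fin n))}
  {E : Set (EuclideanSpace ℝ (Fin n))} {P : AffineSubspace ℝ (EuclideanSpace ℝ (Fin n))}
  {C₀ c R ε δ : ℝ} {x p : EuclideanSpace ℝ (Fin n)}

lemma measure_ball_ne_zero_of_close (hAR : AhlforsRegular μ E d C₀) (hx : x ∈ E) (hR : 0 < R)
    (hclose : IntegralsLipschitzClose μ ν x R ε) (hε : ε ≤ δ * R ^ (d + 1))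
    (hδ : 8 ^ (d + 1) * δ < C₀⁻¹) : ν (ball x (R / 4)) ≠ 0 := by
  intro h0
  have key := hclose.half_mul_measureReal_ball_le (q := x) (s := R / 4) (by positivity)
    (ball_subset_ball (by linarith)) (hAR.measure_ball_ne_top hx (by positivity))
    (by simp [h0])
  have hμ := hAR.le_measureReal_ball hx (r := R / 8) (by positivity)
  rw [Real.rpow_natCast] at hμ
  rw [measureReal_def ν, h0, toReal_zero, show R / 4 / 2 = R / 8 by ring] at key
  have hμ' := mul_le_mul_of_nonneg_left hμ (by positivity : 0 ≤ R / 8)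
  have : C₀⁻¹ * (R / 8) ^ (d + 1) ≤ δ * R ^ (d + 1) := by
    simp only [pow_succ] at hε ⊢
    linarith
  linarith [le_pow_mul_of_mul_div_pow_le hR (by norm_num) _ this]

lemma mul_unitBallHausdorffMeasure_le (hAR : AhlforsRegular μ E d C₀) (hC₀ : 0 ≤ C₀)
    (hx : x ∈ E) (hR : 0 < R) (hc : 0 ≤ c) (hP : Module.finrank ℝ P.direction = d) (hp : p ∈ P)
    (hpx : p ∈ ball x (R / 4)) (hclose : IntegralsLipschitzClose μ (flatMeasure c P d) x R ε)
    (hε : ε ≤ δ * R ^ (d + 1)) :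
    c * unitBallHausdorffMeasure d ≤ 4 ^ (d + 1) * (C₀ / 2 + δ) := by
  have hsub : ball p (R / 2) ⊆ ball x R := ball_subset_ball' (by linarith [mem_ball.1 hpx])
  have hμ : μ (ball x R) ≠ ⊤ := hAR.measure_ball_ne_top hx hR
  have key := hclose.symm.half_mul_measureReal_ball_le (by positivity) hsub
    (flatMeasure_ball_ne_top hP hp (by positivity)) (ne_top_of_le_ne_top hμ (measure_mono hsub))
  have hμp : μ.real (ball p (R / 2)) ≤ C₀ * R ^ d := by
    have := hAR.measureReal_ball_le hC₀ hx hR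
    rw [Real.rpow_natCast] at this
    exact (measureReal_mono hsub hμ).trans this
  rw [flatMeasure_real_ball hc hP hp (by positivity), show R / 2 / 2 = R / 4 by ring] at key
  have hμp' := mul_le_mul_of_nonneg_left hμp (by positivity : 0 ≤ R / 2)
  refine le_pow_mul_of_mul_div_pow_le hR (by norm_num) _ ?_
  simp only [pow_succ] at hε ⊢
  linarith

lemma inv_le_mul_unitBallHausdorffMeasure (hAR : AhlforsRegular μ E d C₀) (hx : x ∈ E)
    (hR : 0 < R) (hc : 0 ≤ c) (hP : Module.finrank ℝ P.direction = d) (hp : p ∈ P)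
    (hpx : p ∈ ball x (R / 4)) (hclose : IntegralsLipschitzClose μ (flatMeasure c P d) x R ε)
    (hε : ε ≤ δ * R ^ (d + 1)) :
    C₀⁻¹ ≤ 4 ^ (d + 1) * (c * unitBallHausdorffMeasure d / 2 + δ) := by
  have hsub : ball x (R / 2) ⊆ ball p R := by
    refine ball_subset_ball' ?_
    rw [dist_comm]
    linarith [mem_ball.1 hpx]
  have hσ : flatMeasure c P d (ball p R) ≠ ⊤ := flatMeasure_ball_ne_top hP hp hR
  have key := hclose.half_mul_measureReal_ball_le (by positivity) (ball_subset_ball (by linarith))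
    (hAR.measure_ball_ne_top hx (by positivity)) (ne_top_of_le_ne_top hσ (measure_mono hsub))
  have hσx : (flatMeasure c P d).real (ball x (R / 2)) ≤ c * R ^ d * unitBallHausdorffMeasure d :=
    (measureReal_mono hsub hσ).trans (flatMeasure_real_ball hc hP hp hR).le
  have hμ := hAR.le_measureReal_ball hx (r := R / 4) (by positivity)
  rw [Real.rpow_natCast] at hμ
  rw [show R / 2 / 2 = R / 4 by ring] at key
  have hμ' := mul_le_mul_of_nonneg_left hμ (by positivity : 0 ≤ R / 4)
  have hσx' := mul_le_mul_of_nonneg_left hσx (by positivity : 0 ≤ R / 2)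
  refine le_pow_mul_of_mul_div_pow_le hR (by norm_num) _ ?_
  simp only [pow_succ] at hε ⊢
  linarith

end AhlforsRegular

lemma one_le_max_inv {ω : ℝ} (hω : 0 < ω) : 1 ≤ max ω ω⁻¹ := by
  rcases le_total ω 1 with h | h
  · exact le_max_of_le_right ((one_le_inv₀ hω).2 h)
  · exact le_max_of_le_left h

lemma inv_le_and_le_mul_max_inv {K ω c : ℝ} (hω : 0 < ω) (hc : 0 < c) (hupper : c * ω ≤ K)
    (hlower : 1 ≤ K * (c * ω)) : (K * max ω ω⁻¹)⁻¹ ≤ c ∧ c ≤ K * max ω ω⁻¹ := by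
  have hK : 0 < K := (mul_pos hc hω).trans_le hupper
  constructor
  · calc (K * max ω ω⁻¹)⁻¹ ≤ (K * ω)⁻¹ :=
          inv_anti₀ (by positivity) (mul_le_mul_of_nonneg_left (le_max_left _ _) hK.le)
      _ ≤ c := by
          rw [inv_le_iff_one_le_mul₀' (by positivity)]
          linarith
  · calc c ≤ K * ω⁻¹ := (le_mul_inv_iff₀ hω).2 hupper
      _ ≤ K * max ω ω⁻¹ := mul_le_mul_of_nonneg_left (le_max_right _ _) hK.le

theorem flat_measure_normalization_general (n d : ℕ) (C₀ : ℝ)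
    (hC₀ : 1 ≤ C₀) :
    ∃ N₀ η₀ C : ℝ, 0 < η₀ ∧ 1 ≤ C ∧
      ∀ (μ : Measure (EuclideanSpace ℝ (Fin n))) (E : Set (EuclideanSpace ℝ (Fin n)))
        (P : AffineSubspace ℝ (EuclideanSpace ℝ (Fin n)))
        (x : EuclideanSpace ℝ (Fin n)) (r N η c : ℝ),
        AhlforsRegular μ E (d : ℝ) C₀ → x ∈ E → 0 < r → N₀ ≤ N → 0 < η → η ≤ η₀ → 0 < c →
        Module.finrank ℝ P.direction = d →
        (P : Set (EuclideanSpace ℝ (Fin n))).Nonempty →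
        (∀ φ : EuclideanSpace ℝ (Fin n) → ℝ, LipschitzWith 1 φ →
          (∀ z ∉ Metric.ball x (N * r), φ z = 0) →
          |(∫ z, φ z ∂μ) -
              ∫ z, φ z ∂((ENNReal.ofReal c) •
                (μH[(d : ℝ)]).restrict (P : Set (EuclideanSpace ℝ (Fin n))))|
            ≤ 2 * η * (N * r) ^ ((d : ℝ) + 1)) →
        ((P : Set (EuclideanSpace ℝ (Fin n))) ∩ Metric.ball x (N * r / 4)).Nonempty ∧
          C⁻¹ ≤ c ∧ c ≤ C := by
  have hω := unitBallHausdorffMeasure_pos d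
  have h4 : (1 : ℝ) ≤ 4 ^ (d + 1) := one_le_pow₀ (by norm_num)
  have h48 : (4 : ℝ) ^ (d + 1) ≤ 8 ^ (d + 1) := pow_le_pow_left₀ (by norm_num) (by norm_num) _
  have hC₀inv : 0 < C₀⁻¹ := inv_pos.2 (by linarith)
  refine ⟨1, C₀⁻¹ / (4 * 8 ^ (d + 1)),
    4 ^ (d + 1) * C₀ * max (unitBallHausdorffMeasure d) (unitBallHausdorffMeasure d)⁻¹,
    by positivity,
    one_le_mul_of_one_le_of_one_le (one_le_mul_of_one_le_of_one_le h4 hC₀) (one_le_max_inv hω),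
    ?_⟩
  intro μ E P x r N η c hAR hx hr hN hη hηle hc hPd _ hφ
  have hR : 0 < N * r := mul_pos (by linarith) hr
  have hclose : IntegralsLipschitzClose μ (flatMeasure c P d) x (N * r)
      (2 * η * (N * r) ^ ((d : ℝ) + 1)) := hφ
  have hε : 2 * η * (N * r) ^ ((d : ℝ) + 1) ≤ 2 * η * (N * r) ^ (d + 1) := by norm_cast
  have hη₈ : 8 ^ (d + 1) * (2 * η) ≤ C₀⁻¹ / 2 := by
    linarith [(le_div_iff₀ (by positivity)).1 hηle]
  have hη₄ : 4 ^ (d + 1) * (2 * η) ≤ C₀⁻¹ / 2 :=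
    (mul_le_mul_of_nonneg_right h48 (by positivity)).trans hη₈
  have hη₁ : 2 * η ≤ C₀ / 2 := by
    linarith [le_mul_of_one_le_left (by positivity : 0 ≤ 2 * η) h4, inv_le_one_of_one_le₀ hC₀]
  obtain ⟨p, hpx, hpP⟩ : (ball x (N * r / 4) ∩ P).Nonempty := by
    refine nonempty_of_measure_ne_zero (μ := μH[(d : ℝ)]) fun h0 ↦ ?_
    refine hAR.measure_ball_ne_zero_of_close hx hR hclose hε (by linarith) ?_
    simp [flatMeasure, Measure.restrict_apply measurableSet_ball, h0]
  have hupper := hAR.mul_unitBallHausdorffMeasure_le (by linarith) hx hR hc.le hPd hpP hpx hclose hε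
  have hlower := hAR.inv_le_mul_unitBallHausdorffMeasure hx hR hc.le hPd hpP hpx hclose hε
  refine ⟨⟨p, hpP, hpx⟩, inv_le_and_le_mul_max_inv hω hc ?_ ?_⟩
  · calc c * unitBallHausdorffMeasure d ≤ 4 ^ (d + 1) * (C₀ / 2 + 2 * η) := hupper
      _ ≤ 4 ^ (d + 1) * C₀ := by gcongr; linarith
  · have : C₀⁻¹ ≤ 4 ^ (d + 1) * (c * unitBallHausdorffMeasure d) := by linarith
    calc 1 = C₀ * C₀⁻¹ := (mul_inv_cancel₀ (by linarith)).symm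
      _ ≤ C₀ * (4 ^ (d + 1) * (c * unitBallHausdorffMeasure d)) := by gcongr
      _ = 4 ^ (d + 1) * C₀ * (c * unitBallHausdorffMeasure d) := by ring

/-- If `μ` is Ahlfors regular of dimension `d` and the localized Wasserstein distance
`D_{x,Nr}(μ, σ)` to the flat measure `σ = c H^d|_P` is at most `2η`, with `N` large and `η`
small (depending only on `n`, `d`, and the AR constant), then `P` meets `B(x, Nr/4)` and
`C⁻¹ ≤ c ≤ C` for a constant depending only on `n`, `d`, and the AR constant. -/
theorem flat_measure_normalization (n d : ℕ) (C₀ : ℝ) (hdn : d < n) (hd : 0 < d)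
    (hC₀ : 1 ≤ C₀) :
    ∃ N₀ η₀ C : ℝ, 0 < η₀ ∧ 1 ≤ C ∧
      ∀ (μ : Measure (EuclideanSpace ℝ (Fin n))) (E : Set (EuclideanSpace ℝ (Fin n)))
        (P : AffineSubspace ℝ (EuclideanSpace ℝ (Fin n)))
        (x : EuclideanSpace ℝ (Fin n)) (r N η c : ℝ),
        AhlforsRegular μ E (d : ℝ) C₀ → x ∈ E → 0 < r → N₀ ≤ N → 0 < η → η ≤ η₀ → 0 < c →
        Module.finrank ℝ P.direction = d →
        (P : Set (EuclideanSpace ℝ (Fin n))).Nonempty →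
        (∀ φ : EuclideanSpace ℝ (Fin n) → ℝ, LipschitzWith 1 φ →
          (∀ z ∉ Metric.ball x (N * r), φ z = 0) →
          |(∫ z, φ z ∂μ) -
              ∫ z, φ z ∂((ENNReal.ofReal c) •
                (μH[(d : ℝ)]).restrict (P : Set (EuclideanSpace ℝ (Fin n))))|
            ≤ 2 * η * (N * r) ^ ((d : ℝ) + 1)) →
        ((P : Set (EuclideanSpace ℝ (Fin n))) ∩ Metric.ball x (N * r / 4)).Nonempty ∧
          C⁻¹ ≤ c ∧ c ≤ C :=
  flat_measure_normalization_general n d C₀ hC₀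
end
end

section
/- Let μ be an Ahlfors regular measure of dimension d on E ⊂ ℝⁿ, P a d-plane, σ = c H^d|_P with D_{x,Nr}(μ,σ) ≤ 2η. If ∫_{B(x,Nr/2)} dist(z,P) dμ(z) ≤ 10 η N^{d+1} r^{d+1} and there exists z ∈ E ∩ B(x, Nr/3) with dist(z,P) ≥ η₁ r where η₁ = C₁ N η^{1/(d+1)} ≤ Nr/6, then C₁ can be chosen (depending only on the AR constant of μ, d, n) so large that this yields a contradiction; i.e., the L¹ bound ∫_{B(x,Nr/2)} dist(z,P) dμ(z) ≤ 10 η N^{d+1} r^{d+1} forces the L^∞ bound sup_{z ∈ E ∩ B(x,Nr/3)} dist(z,P) ≤ C₁ N η^{1/(d+1)} r. -/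
open MeasureTheory Metric Set ENNReal

noncomputable section

/-! If `dist(z, P) > 2s` at a point `z ∈ E`, then `dist(·, P) ≥ s` on `B(z, s)`, so Ahlfors
regularity makes the `L¹` integral at least `C₀⁻¹ s^{d+1}`. For `2s = C₁ N η^{1/(d+1)} r` this is
`C₀⁻¹ (C₁/2)^{d+1} η (N r)^{d+1}`, which exceeds `10 η (N r)^{d+1}` once `C₁ > 20 C₀`. -/

theorem ofReal_mul_measure_ball_le_setLIntegral_infDist {X : Type*} [PseudoMetricSpace X]
    [MeasurableSpace X] [OpensMeasurableSpace X] (μ : Measure X) (S : Set X) {z : X}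
    {s t : ℝ} (hst : t + s ≤ infDist z S) :
    ENNReal.ofReal t * μ (ball z s) ≤ ∫⁻ w in ball z s, ENNReal.ofReal (infDist w S) ∂μ := by
  rw [← setLIntegral_const]
  refine setLIntegral_mono (continuous_infDist_pt S).measurable.ennreal_ofReal fun w hw => ?_
  have hzw : infDist z S ≤ infDist w S + dist z w := infDist_le_infDist_add_dist
  exact ENNReal.ofReal_le_ofReal (by linarith [mem_ball'.mp hw])

theorem AhlforsRegular.ofReal_inv_mul_rpow_add_one_le_setLIntegral_infDist {n : ℕ}
    {μ : Measure (EuclideanSpace ℝ (Fin n))} {E : Set (EuclideanSpace ℝ (Fin n))} {d C₀ : ℝ}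
    (hAR : AhlforsRegular μ E d C₀) (S : Set (EuclideanSpace ℝ (Fin n)))
    {z : EuclideanSpace ℝ (Fin n)} (hz : z ∈ E) {s : ℝ} (hs : 0 < s)
    (hsz : 2 * s ≤ infDist z S) :
    ENNReal.ofReal (C₀⁻¹ * s ^ (d + 1)) ≤
      ∫⁻ w in ball z s, ENNReal.ofReal (infDist w S) ∂μ :=
  calc ENNReal.ofReal (C₀⁻¹ * s ^ (d + 1))
      = ENNReal.ofReal s * ENNReal.ofReal (C₀⁻¹ * s ^ d) := by
        rw [← ENNReal.ofReal_mul hs.le, Real.rpow_add_one hs.ne']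
        ring_nf
    _ ≤ ENNReal.ofReal s * μ (ball z s) := by gcongr; exact (hAR z hz s hs).1
    _ ≤ _ := ofReal_mul_measure_ball_le_setLIntegral_infDist μ S (by linarith)

theorem mul_rpow_one_div_rpow {c η k : ℝ} (hc : 0 ≤ c) (hη : 0 ≤ η) (hk : k ≠ 0) :
    (c * η ^ (1 / k)) ^ k = c ^ k * η := by
  rw [Real.mul_rpow hc (Real.rpow_nonneg hη _), ← Real.rpow_mul hη, one_div_mul_cancel hk,
    Real.rpow_one]

theorem mul_rpow_lt_inv_mul_rpow {A C₀ c k η N r : ℝ} (hC₀ : 0 < C₀) (hc : A * C₀ < c)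
    (hc₁ : 1 ≤ c) (hk : 1 ≤ k) (hη : 0 < η) (hN : 0 < N) (hr : 0 < r) :
    A * η * N ^ k * r ^ k < C₀⁻¹ * (c * N * r * η ^ (1 / k)) ^ k := by
  have hck : c ≤ c ^ k := by
    simpa using Real.rpow_le_rpow_of_exponent_le hc₁ hk
  have hA : A < C₀⁻¹ * c ^ k := by
    rw [lt_inv_mul_iff₀ hC₀]
    linarith
  rw [mul_rpow_one_div_rpow (by positivity) hη.le (by linarith), Real.mul_rpow (by positivity) hr.le,
    Real.mul_rpow (by positivity) hN.le]
  have hpos : 0 < η * N ^ k * r ^ k := by positivity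
  nlinarith

theorem l1_to_linfty_dist_bound_general (n d : ℕ) (C₀ : ℝ)
    (hC₀ : 1 ≤ C₀) :
    ∃ C₁ : ℝ, 1 ≤ C₁ ∧
      ∀ (μ : Measure (EuclideanSpace ℝ (Fin n))) (E : Set (EuclideanSpace ℝ (Fin n)))
        (P : AffineSubspace ℝ (EuclideanSpace ℝ (Fin n)))
        (x : EuclideanSpace ℝ (Fin n)) (r N η : ℝ),
        AhlforsRegular μ E (d : ℝ) C₀ → μ Eᶜ = 0 →
        Module.finrank ℝ P.direction = d →
        (P : Set (EuclideanSpace ℝ (Fin n))).Nonempty →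
        x ∈ E → 0 < r → 0 < N → 0 < η →
        C₁ * N * η ^ (1 / ((d : ℝ) + 1)) ≤ N / 6 →
        (∫⁻ z in Metric.ball x (N * r / 2),
            ENNReal.ofReal (Metric.infDist z (P : Set (EuclideanSpace ℝ (Fin n)))) ∂μ)
          ≤ ENNReal.ofReal (10 * η * N ^ ((d : ℝ) + 1) * r ^ ((d : ℝ) + 1)) →
        ∀ z ∈ E ∩ Metric.ball x (N * r / 3),
          Metric.infDist z (P : Set (EuclideanSpace ℝ (Fin n)))
            ≤ C₁ * N * η ^ (1 / ((d : ℝ) + 1)) * r := by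
  refine ⟨20 * C₀ + 2, by linarith, ?_⟩
  intro μ E P x r N η hAR _ _ _ _ hr hN hη hsmall hint z ⟨hzE, hzx⟩
  set k : ℝ := (d : ℝ) + 1
  set s : ℝ := (10 * C₀ + 1) * N * r * η ^ (1 / k)
  have h2s : 2 * s = (20 * C₀ + 2) * N * η ^ (1 / k) * r := by ring
  have hs : 0 < s := by
    have : 0 < 10 * C₀ + 1 := by linarith
    positivity
  by_contra! hfar
  have hsub : ball z s ⊆ ball x (N * r / 2) := by
    refine ball_subset_ball' ?_
    have := mul_le_mul_of_nonneg_right hsmall hr.le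
    linarith [mem_ball.mp hzx]
  have hlower := (hAR.ofReal_inv_mul_rpow_add_one_le_setLIntegral_infDist _ hzE hs
    (by linarith)).trans ((lintegral_mono_set hsub).trans hint)
  rw [ENNReal.ofReal_le_ofReal_iff (by positivity)] at hlower
  have hupper : 10 * η * N ^ k * r ^ k < C₀⁻¹ * s ^ k :=
    mul_rpow_lt_inv_mul_rpow (by linarith) (by linarith) (by linarith) (by simp [k]) hη hN hr
  exact hupper.not_ge hlower

/-- Chebyshev step: for `μ` Ahlfors regular of dimension `d` supported on `E`, the `L¹`
bound `∫_{B(x,Nr/2)} dist(z,P) dμ(z) ≤ 10 η N^{d+1} r^{d+1}` forces the `L^∞` bound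
`dist(z,P) ≤ C₁ N η^{1/(d+1)} r` for `z ∈ E ∩ B(x, Nr/3)`, provided `C₁` (depending only
on `n`, `d`, and the AR constant) is large enough and `η₁ = C₁ N η^{1/(d+1)} ≤ N/6`. -/
theorem l1_to_linfty_dist_bound (n d : ℕ) (C₀ : ℝ) (hd : 0 < d) (hdn : d < n)
    (hC₀ : 1 ≤ C₀) :
    ∃ C₁ : ℝ, 1 ≤ C₁ ∧
      ∀ (μ : Measure (EuclideanSpace ℝ (Fin n))) (E : Set (EuclideanSpace ℝ (Fin n)))
        (P : AffineSubspace ℝ (EuclideanSpace ℝ (Fin n)))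
        (x : EuclideanSpace ℝ (Fin n)) (r N η : ℝ),
        AhlforsRegular μ E (d : ℝ) C₀ → μ Eᶜ = 0 →
        Module.finrank ℝ P.direction = d →
        (P : Set (EuclideanSpace ℝ (Fin n))).Nonempty →
        x ∈ E → 0 < r → 0 < N → 0 < η →
        C₁ * N * η ^ (1 / ((d : ℝ) + 1)) ≤ N / 6 →
        (∫⁻ z in Metric.ball x (N * r / 2),
            ENNReal.ofReal (Metric.infDist z (P : Set (EuclideanSpace ℝ (Fin n)))) ∂μ)
          ≤ ENNReal.ofReal (10 * η * N ^ ((d : ℝ) + 1) * r ^ ((d : ℝ) + 1)) →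
        ∀ z ∈ E ∩ Metric.ball x (N * r / 3),
          Metric.infDist z (P : Set (EuclideanSpace ℝ (Fin n)))
            ≤ C₁ * N * η ^ (1 / ((d : ℝ) + 1)) * r :=
  l1_to_linfty_dist_bound_general n d C₀ hC₀
end
end
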